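/- arXiv:2005.00657 — 7 statements merged into one kernel-verified Lean document; each statement's English description precedes it below -/
import Mathlib

section
/- Let μ > 0 and γ > 0 with γ ≥ √μ/2. Then for every x ∈ ℝ, the function F(u) = (x − u)²/(2μ) + log(γ² + u²) is strictly convex on ℝ. -/
/-!
Since `F'(u) = (u - x)/μ + 2u/(γ² + u²)`, it suffices that `F'` is strictly increasing. Writing
`c = γ²`, split `F'` as `(1/μ - 1/(4c)) u - x/μ` plus `u/(4c) + 2u/(c + u²)`: the first part is
monotone exactly because `μ ≤ 4c`, i.e. `√μ/2 ≤ γ`, and the second is strictly increasing because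
its difference quotient has the numerator `(ab - 3c)² + c (a - b)² > 0`.
-/

open Real

lemma add_sq_mul_add_sq_add_eight_mul_sub_mul_pos {a b c : ℝ} (hc : 0 < c) (hab : a ≠ b) :
    0 < (c + a ^ 2) * (c + b ^ 2) + 8 * c * (c - a * b) := by
  have hsq : 0 < (a - b) ^ 2 := sq_pos_of_ne_zero (sub_ne_zero.2 hab)
  have h : (c + a ^ 2) * (c + b ^ 2) + 8 * c * (c - a * b) =
      (a * b - 3 * c) ^ 2 + c * (a - b) ^ 2 := by
    ring
  rw [h]
  positivity

lemma strictMono_div_add_two_mul_div_add_sq {c : ℝ} (hc : 0 < c) :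
    StrictMono fun u : ℝ => u / (4 * c) + 2 * u / (c + u ^ 2) := by
  intro a b hab
  have ha : 0 < c + a ^ 2 := by positivity
  have hb : 0 < c + b ^ 2 := by positivity
  have hdiff : (b / (4 * c) + 2 * b / (c + b ^ 2)) - (a / (4 * c) + 2 * a / (c + a ^ 2)) =
      (b - a) * ((c + a ^ 2) * (c + b ^ 2) + 8 * c * (c - a * b)) /
        (4 * c * ((c + a ^ 2) * (c + b ^ 2))) := by
    field_simp
    ring
  rw [← sub_pos, hdiff]
  exact div_pos
    (mul_pos (sub_pos.2 hab) (add_sq_mul_add_sq_add_eight_mul_sub_mul_pos hc hab.ne))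
    (by positivity)

lemma strictMono_sub_div_add_two_mul_div_add_sq {μ c : ℝ} (hμ : 0 < μ) (hμc : μ ≤ 4 * c)
    (x : ℝ) : StrictMono fun u : ℝ => (u - x) / μ + 2 * u / (c + u ^ 2) := by
  have hc : 0 < c := by linarith
  have hslope : 0 ≤ 1 / μ - 1 / (4 * c) := sub_nonneg.2 (one_div_le_one_div_of_le hμ hμc)
  have hlin : Monotone fun u : ℝ => (1 / μ - 1 / (4 * c)) * u - x / μ :=
    fun a b hab => by simpa using mul_le_mul_of_nonneg_left hab hslope
  convert hlin.add_strictMono (strictMono_div_add_two_mul_div_add_sq hc) using 2 with u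
  field_simp
  ring

lemma hasDerivAt_sub_sq_div_add_log_add_sq {μ c : ℝ} (hc : 0 < c) (x u : ℝ) :
    HasDerivAt (fun u : ℝ => (x - u) ^ 2 / (2 * μ) + log (c + u ^ 2))
      ((u - x) / μ + 2 * u / (c + u ^ 2)) u := by
  have hquad : HasDerivAt (fun u : ℝ => (x - u) ^ 2 / (2 * μ)) (2 * (x - u) * -1 / (2 * μ)) u :=
    by simpa using (((hasDerivAt_id' u).const_sub x).pow 2).div_const (2 * μ)
  have hlog : HasDerivAt (fun u : ℝ => log (c + u ^ 2)) (2 * u / (c + u ^ 2)) u := by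
    simpa using (((hasDerivAt_id' u).pow 2).const_add c).log (by positivity : c + u ^ 2 ≠ 0)
  exact (hquad.add hlog).congr_deriv (by ring)

lemma strictConvexOn_sub_sq_div_add_log_add_sq {μ c : ℝ} (hμ : 0 < μ) (hμc : μ ≤ 4 * c)
    (x : ℝ) :
    StrictConvexOn ℝ Set.univ fun u : ℝ => (x - u) ^ 2 / (2 * μ) + log (c + u ^ 2) := by
  have hF := hasDerivAt_sub_sq_div_add_log_add_sq (μ := μ) (by linarith : 0 < c) x
  refine StrictMono.strictConvexOn_univ_of_deriv
    (continuous_iff_continuousAt.2 fun u => (hF u).continuousAt) ?_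
  rw [funext fun u => (hF u).deriv]
  exact strictMono_sub_div_add_two_mul_div_add_sq hμ hμc x

theorem cauchy_prox_objective_strictConvexOn_general
    (μ γ : ℝ) (hμ : 0 < μ) (hcond : Real.sqrt μ / 2 ≤ γ) (x : ℝ) :
    StrictConvexOn ℝ (Set.univ : Set ℝ)
      (fun u : ℝ => (x - u) ^ 2 / (2 * μ) + Real.log (γ ^ 2 + u ^ 2)) := by
  have hμγ : μ ≤ 4 * γ ^ 2 := by
    have h := (Real.sqrt_le_iff.1 (by linarith : Real.sqrt μ ≤ 2 * γ)).2
    linarith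
  exact strictConvexOn_sub_sq_div_add_log_add_sq hμ hμγ x

/-- For `μ > 0`, `γ > 0` with `γ ≥ √μ / 2`, the forward–backward sub-problem
`F(u) = (x − u)²/(2μ) + log(γ² + u²)` is strictly convex on `ℝ` for every `x`. -/
theorem cauchy_prox_objective_strictConvexOn
    (μ γ : ℝ) (hμ : 0 < μ) (hγ : 0 < γ) (hcond : Real.sqrt μ / 2 ≤ γ) (x : ℝ) :
    StrictConvexOn ℝ (Set.univ : Set ℝ)
      (fun u : ℝ => (x - u) ^ 2 / (2 * μ) + Real.log (γ ^ 2 + u ^ 2)) :=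
  cauchy_prox_objective_strictConvexOn_general μ γ hμ hcond x
end

section
/- Let n ∈ ℕ, μ > 0 and γ > 0 with γ ≥ √μ/2. Then for every x ∈ ℝⁿ, the function F(u) = ‖x − u‖²/(2μ) + Σᵢ log(γ² + uᵢ²) is strictly convex on Euclidean space ℝⁿ, where ‖·‖ is the Euclidean norm. -/
/-!
The objective is separable: `‖x - u‖² = ∑ᵢ (xᵢ - uᵢ)²`, so it suffices that each scalar function
`φ(t) = (c - t)²/(2μ) + log(γ² + t²)` is strictly convex. Its derivative
`φ'(t) = (t - c)/μ + 2t/(γ² + t²)` is strictly increasing: the difference quotient of `φ'` between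
`a ≠ b` has the sign of `(γ² + a²)(γ² + b²) + 2μ(γ² - ab)`, and writing
`(γ² + a²)(γ² + b²) = (γ² + ab)² + γ²(a - b)²` and using `μ ≤ 4γ²` when `ab > γ²` bounds this below
by `(ab - 3γ²)² + γ²(a - b)² > 0`.
-/

open Set

section StrictConvexOn

variable {𝕜 β : Type*} [Semiring 𝕜] [PartialOrder 𝕜]

theorem StrictConvexOn.comp_linearMap {E F : Type*} [AddCommMonoid E] [AddCommMonoid F]
    [AddCommMonoid β] [PartialOrder β] [Module 𝕜 E] [Module 𝕜 F] [SMul 𝕜 β] {f : F → β} {s : Set F}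
    (hf : StrictConvexOn 𝕜 s f) (g : E →ₗ[𝕜] F) (hg : Function.Injective g) :
    StrictConvexOn 𝕜 (g ⁻¹' s) (f ∘ g) :=
  ⟨hf.1.linear_preimage _, fun x hx y hy hxy a b ha hb hab =>
    calc
      f (g (a • x + b • y)) = f (a • g x + b • g y) := by rw [g.map_add, g.map_smul, g.map_smul]
      _ < a • f (g x) + b • f (g y) := hf.2 hx hy (hg.ne hxy) ha hb hab⟩

theorem StrictConvexOn.sum_pi {ι : Type*} [Fintype ι] {E : ι → Type*} [∀ i, AddCommMonoid (E i)]
    [∀ i, Module 𝕜 (E i)] [AddCommMonoid β] [PartialOrder β] [IsOrderedCancelAddMonoid β]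
    [Module 𝕜 β] {s : ∀ i, Set (E i)} {f : ∀ i, E i → β}
    (hf : ∀ i, StrictConvexOn 𝕜 (s i) (f i)) :
    StrictConvexOn 𝕜 (univ.pi s) fun u => ∑ i, f i (u i) := by
  refine ⟨convex_pi fun i _ => (hf i).1, fun u hu v hv huv a b ha hb hab => ?_⟩
  obtain ⟨j, hj⟩ : ∃ j, u j ≠ v j := Function.ne_iff.mp huv
  simp only [Finset.smul_sum, ← Finset.sum_add_distrib]
  refine Finset.sum_lt_sum (fun i _ => ?_) ⟨j, Finset.mem_univ j, ?_⟩
  · exact (hf i).convexOn.2 (hu i trivial) (hv i trivial) ha.le hb.le hab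
  · exact (hf j).2 (hu j trivial) (hv j trivial) hj ha hb hab

end StrictConvexOn

section CauchyProx

variable {μ γ : ℝ}

theorem cauchy_prox_slope_numerator_pos {a b : ℝ} (hμ : 0 < μ) (hμγ : μ ≤ 4 * γ ^ 2)
    (hab : a ≠ b) : 0 < (γ ^ 2 + a ^ 2) * (γ ^ 2 + b ^ 2) + 2 * μ * (γ ^ 2 - a * b) := by
  have hγ : 0 < γ ^ 2 := by linarith
  have hgap : 0 < γ ^ 2 * (a - b) ^ 2 := mul_pos hγ (by positivity [sub_ne_zero.2 hab])
  have hsplit : (γ ^ 2 + a ^ 2) * (γ ^ 2 + b ^ 2) = (γ ^ 2 + a * b) ^ 2 + γ ^ 2 * (a - b) ^ 2 := by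
    ring
  rcases le_or_gt (a * b) (γ ^ 2) with hle | hgt
  · nlinarith [sq_nonneg (γ ^ 2 + a * b), mul_nonneg hμ.le (sub_nonneg.2 hle)]
  · have : 4 * γ ^ 2 * (γ ^ 2 - a * b) ≤ μ * (γ ^ 2 - a * b) :=
      mul_le_mul_of_nonpos_right hμγ (by linarith)
    nlinarith [sq_nonneg (a * b - 3 * γ ^ 2)]

theorem strictMono_cauchy_prox_deriv (hμ : 0 < μ) (hμγ : μ ≤ 4 * γ ^ 2) (c : ℝ) :
    StrictMono fun t => (t - c) / μ + 2 * t / (γ ^ 2 + t ^ 2) := by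
  intro a b hab
  have hγ : 0 < γ ^ 2 := by linarith
  have ha : 0 < γ ^ 2 + a ^ 2 := by positivity
  have hb : 0 < γ ^ 2 + b ^ 2 := by positivity
  have hdiff : ((b - c) / μ + 2 * b / (γ ^ 2 + b ^ 2)) - ((a - c) / μ + 2 * a / (γ ^ 2 + a ^ 2))
      = (b - a) * ((γ ^ 2 + a ^ 2) * (γ ^ 2 + b ^ 2) + 2 * μ * (γ ^ 2 - a * b))
        / (μ * (γ ^ 2 + a ^ 2) * (γ ^ 2 + b ^ 2)) := by
    field_simp
    ring
  rw [← sub_pos, hdiff]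
  exact div_pos (mul_pos (sub_pos.2 hab) (cauchy_prox_slope_numerator_pos hμ hμγ hab.ne))
    (by positivity)

theorem hasDerivAt_cauchy_prox_scalar (hγ : γ ≠ 0) (c t : ℝ) :
    HasDerivAt (fun t => (c - t) ^ 2 / (2 * μ) + Real.log (γ ^ 2 + t ^ 2))
      ((t - c) / μ + 2 * t / (γ ^ 2 + t ^ 2)) t := by
  have hquad := (((hasDerivAt_id t).const_sub c).pow 2).div_const (2 * μ)
  have hlog := ((hasDerivAt_pow 2 t).const_add (γ ^ 2)).log (by positivity)
  refine (hquad.add hlog).congr_deriv ?_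
  simp only [id]
  field_simp
  ring

theorem strictConvexOn_cauchy_prox_scalar (hμ : 0 < μ) (hμγ : μ ≤ 4 * γ ^ 2) (c : ℝ) :
    StrictConvexOn ℝ univ fun t => (c - t) ^ 2 / (2 * μ) + Real.log (γ ^ 2 + t ^ 2) := by
  have hγ : γ ≠ 0 := by rintro rfl; linarith
  have hderiv := hasDerivAt_cauchy_prox_scalar (μ := μ) hγ c
  refine StrictMono.strictConvexOn_univ_of_deriv
    (continuous_iff_continuousAt.2 fun t => (hderiv t).continuousAt) ?_
  rw [funext fun t => (hderiv t).deriv]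
  exact strictMono_cauchy_prox_deriv hμ hμγ c

end CauchyProx

theorem cauchy_prox_objective_strictConvexOn_euclidean_general
    (n : ℕ) (μ γ : ℝ) (hμ : 0 < μ) (hcond : Real.sqrt μ / 2 ≤ γ)
    (x : EuclideanSpace ℝ (Fin n)) :
    StrictConvexOn ℝ (Set.univ : Set (EuclideanSpace ℝ (Fin n)))
      (fun u : EuclideanSpace ℝ (Fin n) =>
        ‖x - u‖ ^ 2 / (2 * μ) + ∑ i, Real.log (γ ^ 2 + (u i) ^ 2)) := by
  have hμγ : μ ≤ 4 * γ ^ 2 := by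
    have hsqrt : Real.sqrt μ ≤ 2 * γ := by linarith
    nlinarith [Real.sq_sqrt hμ.le, Real.sqrt_nonneg μ]
  have hsep : (fun u : EuclideanSpace ℝ (Fin n) =>
        ‖x - u‖ ^ 2 / (2 * μ) + ∑ i, Real.log (γ ^ 2 + (u i) ^ 2)) =
      (fun v : Fin n → ℝ => ∑ i, ((x i - v i) ^ 2 / (2 * μ) + Real.log (γ ^ 2 + v i ^ 2))) ∘
        WithLp.linearEquiv 2 ℝ (Fin n → ℝ) := by
    funext u
    simp only [EuclideanSpace.norm_sq_eq, Function.comp_apply, WithLp.coe_linearEquiv,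
      PiLp.sub_apply, Real.norm_eq_abs, sq_abs, Finset.sum_div, Finset.sum_add_distrib]
  rw [hsep]
  simpa using (StrictConvexOn.sum_pi fun i => strictConvexOn_cauchy_prox_scalar hμ hμγ (x i)
    ).comp_linearMap _ (WithLp.linearEquiv 2 ℝ (Fin n → ℝ)).injective

/-- For `μ > 0`, `γ > 0` with `γ ≥ √μ / 2`, the multivariate forward–backward sub-problem
`F(u) = ‖x − u‖²/(2μ) + ∑ᵢ log(γ² + uᵢ²)` is strictly convex on Euclidean `ℝⁿ`. -/
theorem cauchy_prox_objective_strictConvexOn_euclidean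
    (n : ℕ) (μ γ : ℝ) (hμ : 0 < μ) (hγ : 0 < γ) (hcond : Real.sqrt μ / 2 ≤ γ)
    (x : EuclideanSpace ℝ (Fin n)) :
    StrictConvexOn ℝ (Set.univ : Set (EuclideanSpace ℝ (Fin n)))
      (fun u : EuclideanSpace ℝ (Fin n) =>
        ‖x - u‖ ^ 2 / (2 * μ) + ∑ i, Real.log (γ ^ 2 + (u i) ^ 2)) :=
  cauchy_prox_objective_strictConvexOn_euclidean_general n μ γ hμ hcond x
end

section
/- Let γ > 0. Then the function u ↦ log(γ² + u²) + u²/(8γ²) is convex on ℝ; that is, the Cauchy-based penalty ψ_γ is (1/(4γ²))-weakly convex. -/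
/-!
The second derivative of `log (c + u²)` is `2 (c - u²) / (c + u²)²`, which is smallest at
`u² = 3c`, where it equals `-1 / (4c)`. Adding `u² / (8c)`, whose second derivative is
`1 / (4c)`, gives the nonnegative second derivative `(u² - 3c)² / (4c (c + u²)²)`.
-/

open Set

theorem convexOn_univ_of_hasDerivAt2_nonneg {f f' f'' : ℝ → ℝ}
    (hf' : ∀ x, HasDerivAt f (f' x) x) (hf'' : ∀ x, HasDerivAt f' (f'' x) x)
    (hf''₀ : ∀ x, 0 ≤ f'' x) : ConvexOn ℝ univ f :=
  convexOn_of_hasDerivWithinAt2_nonneg convex_univ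
    (fun x _ ↦ (hf' x).continuousAt.continuousWithinAt)
    (fun x _ ↦ (hf' x).hasDerivWithinAt) (fun x _ ↦ (hf'' x).hasDerivWithinAt)
    (fun x _ ↦ hf''₀ x)

theorem hasDerivAt_const_add_sq (c x : ℝ) : HasDerivAt (fun u ↦ c + u ^ 2) (2 * x) x :=
  ((hasDerivAt_pow 2 x).const_add c).congr_deriv (by norm_num)

section

variable {c : ℝ}

theorem hasDerivAt_log_add_sq (hc : 0 < c) (x : ℝ) :
    HasDerivAt (fun u ↦ Real.log (c + u ^ 2)) (2 * x / (c + x ^ 2)) x :=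
  (hasDerivAt_const_add_sq c x).log (by positivity)

theorem hasDerivAt_two_mul_div_add_sq (hc : 0 < c) (x : ℝ) :
    HasDerivAt (fun u ↦ 2 * u / (c + u ^ 2)) (2 * (c - x ^ 2) / (c + x ^ 2) ^ 2) x :=
  (((hasDerivAt_id' x).const_mul 2).fun_div (hasDerivAt_const_add_sq c x)
    (by positivity)).congr_deriv (by ring)

theorem neg_inv_four_mul_le_two_mul_sub_div_sq (hc : 0 < c) (x : ℝ) :
    -(4 * c)⁻¹ ≤ 2 * (c - x ^ 2) / (c + x ^ 2) ^ 2 := by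
  have hgap : 2 * (c - x ^ 2) / (c + x ^ 2) ^ 2 + (4 * c)⁻¹
      = (x ^ 2 - 3 * c) ^ 2 / (4 * c * (c + x ^ 2) ^ 2) := by
    field_simp
    ring
  have : 0 ≤ (x ^ 2 - 3 * c) ^ 2 / (4 * c * (c + x ^ 2) ^ 2) := by positivity
  linarith

theorem convexOn_log_add_sq_add_mul_sq (hc : 0 < c) {κ : ℝ} (hκ : (8 * c)⁻¹ ≤ κ) :
    ConvexOn ℝ univ (fun u ↦ Real.log (c + u ^ 2) + κ * u ^ 2) := by
  refine convexOn_univ_of_hasDerivAt2_nonneg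
    (f' := fun x ↦ 2 * x / (c + x ^ 2) + 2 * κ * x)
    (f'' := fun x ↦ 2 * (c - x ^ 2) / (c + x ^ 2) ^ 2 + 2 * κ) (fun x ↦ ?_) (fun x ↦ ?_) fun x ↦ ?_
  · exact ((hasDerivAt_log_add_sq hc x).fun_add
      (((hasDerivAt_pow 2 x).const_mul κ))).congr_deriv (by norm_num; ring)
  · exact ((hasDerivAt_two_mul_div_add_sq hc x).fun_add
      ((hasDerivAt_id' x).const_mul (2 * κ))).congr_deriv (by ring)
  · have h8 : (4 * c)⁻¹ = 2 * (8 * c)⁻¹ := by field_simp; norm_num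
    have := neg_inv_four_mul_le_two_mul_sub_div_sq hc x
    linarith

end

/-- For `γ > 0`, the function `u ↦ log(γ² + u²) + u²/(8γ²)` is convex on `ℝ`;
i.e. the Cauchy-based penalty is `(1/(4γ²))`-weakly convex. -/
theorem cauchy_penalty_weakly_convex
    (γ : ℝ) (hγ : 0 < γ) :
    ConvexOn ℝ (Set.univ : Set ℝ)
      (fun u : ℝ => Real.log (γ ^ 2 + u ^ 2) + u ^ 2 / (8 * γ ^ 2)) := by
  have hconv := convexOn_log_add_sq_add_mul_sq (pow_pos hγ 2) le_rfl
  simpa only [div_eq_inv_mul] using hconv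
end

section
/- Let μ > 0 and γ > 0 with γ ≥ √μ/2. Then for every x ∈ ℝ, the cubic equation u³ − x u² + (γ² + 2μ)u − x γ² = 0 has exactly one real solution u. -/
/-!
Dividing the cubic by `γ² + u²` turns it into `u + 2μu / (γ² + u²) = x`, the equation
`(id + μ ψ_γ') u = x` of the proximal point. For `u < v` the difference of the left-hand sides is
`(v - u) ((uv + γ² - μ)² + γ² (u - v)² + μ (4γ² - μ)) / ((γ² + u²)(γ² + v²))`, which is positive as
soon as `μ ≤ 4γ²`; so the left-hand side is strictly increasing, and being continuous, odd and
above the identity on `[0, ∞)`, it takes every real value exactly once.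
-/

/-- The map `u ↦ u + μ ψ_γ'(u)` whose inverse is the proximal map of `μ ψ_γ`. -/
noncomputable def cauchyShift (μ γ u : ℝ) : ℝ :=
  u + 2 * μ * u / (γ ^ 2 + u ^ 2)

namespace cauchyShift

variable {μ γ : ℝ}

lemma map_neg (u : ℝ) : cauchyShift μ γ (-u) = -cauchyShift μ γ u := by
  unfold cauchyShift
  ring

lemma self_le (hμ : 0 ≤ μ) {u : ℝ} (hu : 0 ≤ u) : u ≤ cauchyShift μ γ u :=
  le_add_of_nonneg_right (by positivity)

lemma continuous (hγ : γ ≠ 0) : Continuous (cauchyShift μ γ) :=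
  continuous_id.add <| by
    fun_prop (disch := intro u; positivity)

lemma sub_eq (hγ : γ ≠ 0) (u v : ℝ) :
    cauchyShift μ γ v - cauchyShift μ γ u =
      (v - u) * ((u * v + γ ^ 2 - μ) ^ 2 + γ ^ 2 * (u - v) ^ 2 + μ * (4 * γ ^ 2 - μ)) /
        ((γ ^ 2 + u ^ 2) * (γ ^ 2 + v ^ 2)) := by
  unfold cauchyShift
  field_simp
  ring

lemma strictMono (hγ : γ ≠ 0) (hμ : 0 ≤ μ) (hμγ : μ ≤ 4 * γ ^ 2) :
    StrictMono (cauchyShift μ γ) := by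
  intro u v huv
  have hgap : 0 < γ ^ 2 * (u - v) ^ 2 := by
    have : u - v ≠ 0 := sub_ne_zero.2 huv.ne
    positivity
  have hfactor : 0 < (u * v + γ ^ 2 - μ) ^ 2 + γ ^ 2 * (u - v) ^ 2 + μ * (4 * γ ^ 2 - μ) := by
    have := mul_nonneg hμ (sub_nonneg.2 hμγ)
    positivity
  rw [← sub_pos, sub_eq hγ]
  exact div_pos (mul_pos (sub_pos.2 huv) hfactor) (by positivity)

lemma surjective (hγ : γ ≠ 0) (hμ : 0 ≤ μ) : Function.Surjective (cauchyShift μ γ) := by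
  intro x
  have hx : x ∈ Set.Icc (cauchyShift μ γ (-|x|)) (cauchyShift μ γ |x|) := by
    have := self_le (γ := γ) hμ (abs_nonneg x)
    rw [map_neg]
    constructor <;> linarith [neg_abs_le x, le_abs_self x]
  obtain ⟨u, -, hu⟩ := intermediate_value_Icc (neg_le_self (abs_nonneg x))
    (continuous hγ).continuousOn hx
  exact ⟨u, hu⟩

end cauchyShift

lemma cauchy_prox_cubic_eq_mul_cauchyShift_sub {μ γ : ℝ} (hγ : γ ≠ 0) (x u : ℝ) :
    u ^ 3 - x * u ^ 2 + (γ ^ 2 + 2 * μ) * u - x * γ ^ 2 =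
      (γ ^ 2 + u ^ 2) * (cauchyShift μ γ u - x) := by
  unfold cauchyShift
  field_simp
  ring

/-- For `μ > 0`, `γ > 0` with `γ ≥ √μ / 2`, and any `x ∈ ℝ`, the cubic equation
`u³ − x u² + (γ² + 2μ) u − x γ² = 0` has exactly one real solution. -/
theorem cauchy_prox_cubic_unique_root
    (μ γ : ℝ) (hμ : 0 < μ) (hγ : 0 < γ) (hcond : Real.sqrt μ / 2 ≤ γ) (x : ℝ) :
    ∃! u : ℝ, u ^ 3 - x * u ^ 2 + (γ ^ 2 + 2 * μ) * u - x * γ ^ 2 = 0 := by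
  have hμγ : μ ≤ 4 * γ ^ 2 := by
    have := (Real.sqrt_le_iff.1 (show Real.sqrt μ ≤ 2 * γ by linarith)).2
    linarith
  have hroot (u : ℝ) :
      u ^ 3 - x * u ^ 2 + (γ ^ 2 + 2 * μ) * u - x * γ ^ 2 = 0 ↔ cauchyShift μ γ u = x := by
    rw [cauchy_prox_cubic_eq_mul_cauchyShift_sub hγ.ne', mul_eq_zero, sub_eq_zero,
      or_iff_right (by positivity)]
  simp only [hroot]
  exact Function.Bijective.existsUnique
    ⟨(cauchyShift.strictMono hγ.ne' hμ.le hμγ).injective, cauchyShift.surjective hγ.ne' hμ.le⟩ x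
end

section
/- Let μ > 0 and γ > 0 with γ ≥ √μ/2, and let x ∈ ℝ. Then the function F(u) = (x − u)²/(2μ) + log(γ² + u²) attains its infimum on ℝ at a unique point u*; i.e. the Cauchy proximal operator prox^μ_{Cauchy}(x) is well defined as the unique global minimizer of F, and u* is the unique real root of u³ − x u² + (γ² + 2μ)u − x γ² = 0. -/
/-!
Stationary points of `F u = (x - u)²/(2μ) + log (γ² + u²)` are the solutions of `g u = x`, where
`g u = u + 2μu/(γ² + u²)`, and `F' = (g - x)/μ`. When `μ ≤ 4γ²` the map `g` is a strictly increasing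
continuous surjection of `ℝ`, so `g u = x` has exactly one solution `c`; then `F` decreases on
`(-∞, c]` and increases on `[c, ∞)`, making `c` the unique global minimizer. Clearing the denominator
in `g u = x` gives the cubic.
-/

open Set

noncomputable section

/-- The proximal objective of the Cauchy penalty, up to the additive constant `-log γ`. -/
def cauchyProxObjective (μ γ x u : ℝ) : ℝ :=
  (x - u) ^ 2 / (2 * μ) + Real.log (γ ^ 2 + u ^ 2)

def cauchyStationaryMap (μ γ u : ℝ) : ℝ :=
  u + 2 * μ * u / (γ ^ 2 + u ^ 2)

end

section

variable {μ γ : ℝ}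

theorem cauchyStationaryMap_sub (hγ : γ ≠ 0) (a b : ℝ) :
    cauchyStationaryMap μ γ b - cauchyStationaryMap μ γ a =
      (b - a) * ((γ ^ 2 + a ^ 2) * (γ ^ 2 + b ^ 2) + 2 * μ * (γ ^ 2 - a * b)) /
        ((γ ^ 2 + a ^ 2) * (γ ^ 2 + b ^ 2)) := by
  unfold cauchyStationaryMap
  field_simp
  ring

theorem strictMono_cauchyStationaryMap (hμ : 0 ≤ μ) (hγ : γ ≠ 0) (hμγ : μ ≤ 4 * γ ^ 2) :
    StrictMono (cauchyStationaryMap μ γ) := by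
  intro a b hab
  rw [← sub_pos, cauchyStationaryMap_sub hγ]
  have hγ2 : 0 < γ ^ 2 := by positivity
  -- `(γ² + a²)(γ² + b²) + 2μ(γ² - ab) = (ab + γ² - μ)² + γ²(b - a)² + μ(4γ² - μ)`
  have hfactor : 0 < (γ ^ 2 + a ^ 2) * (γ ^ 2 + b ^ 2) + 2 * μ * (γ ^ 2 - a * b) := by
    nlinarith [sq_nonneg (a * b + γ ^ 2 - μ), mul_nonneg hμ (sub_nonneg.2 hμγ),
      mul_pos hγ2 (pow_pos (sub_pos.2 hab) 2)]
  exact div_pos (mul_pos (sub_pos.2 hab) hfactor) (by positivity)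

theorem continuous_cauchyStationaryMap (hγ : γ ≠ 0) : Continuous (cauchyStationaryMap μ γ) :=
  continuous_id.add <| (continuous_const.mul continuous_id).div (by fun_prop)
    fun u => by positivity

theorem le_cauchyStationaryMap (hμ : 0 ≤ μ) {u : ℝ} (hu : 0 ≤ u) : u ≤ cauchyStationaryMap μ γ u :=
  le_add_of_nonneg_right (by positivity)

theorem cauchyStationaryMap_le (hμ : 0 ≤ μ) {u : ℝ} (hu : u ≤ 0) : cauchyStationaryMap μ γ u ≤ u :=
  add_le_of_nonpos_right <|
    div_nonpos_of_nonpos_of_nonneg (mul_nonpos_of_nonneg_of_nonpos (by positivity) hu)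
      (by positivity)

theorem surjective_cauchyStationaryMap (hμ : 0 ≤ μ) (hγ : γ ≠ 0) :
    Function.Surjective (cauchyStationaryMap μ γ) := by
  intro x
  have hM : 0 ≤ |x| := abs_nonneg x
  obtain ⟨c, -, hc⟩ := intermediate_value_Icc (neg_le_self hM)
    (continuous_cauchyStationaryMap hγ).continuousOn
    ⟨(cauchyStationaryMap_le hμ (neg_nonpos.2 hM)).trans (neg_abs_le x),
      (le_abs_self x).trans (le_cauchyStationaryMap hμ hM)⟩
  exact ⟨c, hc⟩

theorem cauchyStationaryMap_sub_mul (hγ : γ ≠ 0) (u x : ℝ) :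
    (cauchyStationaryMap μ γ u - x) * (γ ^ 2 + u ^ 2) =
      u ^ 3 - x * u ^ 2 + (γ ^ 2 + 2 * μ) * u - x * γ ^ 2 := by
  unfold cauchyStationaryMap
  field_simp
  ring

theorem cauchyStationaryMap_eq_iff (hγ : γ ≠ 0) {u x : ℝ} :
    cauchyStationaryMap μ γ u = x ↔ u ^ 3 - x * u ^ 2 + (γ ^ 2 + 2 * μ) * u - x * γ ^ 2 = 0 := by
  have hpos : γ ^ 2 + u ^ 2 ≠ 0 := by positivity
  rw [← cauchyStationaryMap_sub_mul hγ, mul_eq_zero, sub_eq_zero, or_iff_left hpos]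

theorem hasDerivAt_cauchyProxObjective (hμ : μ ≠ 0) (hγ : γ ≠ 0) (x u : ℝ) :
    HasDerivAt (cauchyProxObjective μ γ x) ((cauchyStationaryMap μ γ u - x) / μ) u := by
  have hquad : HasDerivAt (fun v : ℝ => (x - v) ^ 2 / (2 * μ)) ((u - x) / μ) u := by
    refine ((((hasDerivAt_id u).const_sub x).pow 2).div_const (2 * μ)).congr_deriv ?_
    simp only [id]
    field_simp
    ring
  have hlog : HasDerivAt (fun v : ℝ => Real.log (γ ^ 2 + v ^ 2)) (2 * u / (γ ^ 2 + u ^ 2)) u := by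
    refine (((hasDerivAt_pow 2 u).const_add (γ ^ 2)).log (by positivity)).congr_deriv ?_
    ring
  refine (hquad.add hlog).congr_deriv ?_
  unfold cauchyStationaryMap
  field_simp
  ring

theorem continuous_cauchyProxObjective (hγ : γ ≠ 0) (x : ℝ) :
    Continuous (cauchyProxObjective μ γ x) :=
  (((continuous_const.sub continuous_id).pow 2).div_const _).add <|
    Continuous.log (by fun_prop) fun v => by positivity

variable {x c : ℝ}

theorem strictMonoOn_cauchyProxObjective (hμ : 0 < μ) (hγ : γ ≠ 0) (hμγ : μ ≤ 4 * γ ^ 2)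
    (hc : cauchyStationaryMap μ γ c = x) : StrictMonoOn (cauchyProxObjective μ γ x) (Ici c) := by
  refine strictMonoOn_of_deriv_pos (convex_Ici c) (continuous_cauchyProxObjective hγ x).continuousOn
    fun v hv => ?_
  rw [interior_Ici] at hv
  rw [(hasDerivAt_cauchyProxObjective hμ.ne' hγ x v).deriv, ← hc]
  exact div_pos (sub_pos.2 (strictMono_cauchyStationaryMap hμ.le hγ hμγ hv)) hμ

theorem strictAntiOn_cauchyProxObjective (hμ : 0 < μ) (hγ : γ ≠ 0) (hμγ : μ ≤ 4 * γ ^ 2)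
    (hc : cauchyStationaryMap μ γ c = x) : StrictAntiOn (cauchyProxObjective μ γ x) (Iic c) := by
  refine strictAntiOn_of_deriv_neg (convex_Iic c) (continuous_cauchyProxObjective hγ x).continuousOn
    fun v hv => ?_
  rw [interior_Iic] at hv
  rw [(hasDerivAt_cauchyProxObjective hμ.ne' hγ x v).deriv, ← hc]
  exact div_neg_of_neg_of_pos (sub_neg.2 (strictMono_cauchyStationaryMap hμ.le hγ hμγ hv)) hμ

theorem cauchyProxObjective_lt_of_ne (hμ : 0 < μ) (hγ : γ ≠ 0) (hμγ : μ ≤ 4 * γ ^ 2)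
    (hc : cauchyStationaryMap μ γ c = x) {v : ℝ} (hv : v ≠ c) :
    cauchyProxObjective μ γ x c < cauchyProxObjective μ γ x v := by
  rcases hv.lt_or_gt with h | h
  · exact strictAntiOn_cauchyProxObjective hμ hγ hμγ hc h.le self_mem_Iic h
  · exact strictMonoOn_cauchyProxObjective hμ hγ hμγ hc self_mem_Ici h.le h

end

/-- For `μ > 0`, `γ > 0` with `γ ≥ √μ / 2`, and `x ∈ ℝ`, the proximal objective
`F(u) = (x − u)²/(2μ) + log(γ² + u²)` attains its infimum at a unique point `u*`,
i.e. the Cauchy proximal operator is well defined as the unique global minimizer of `F`,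
and `u*` is the unique real root of `u³ − x u² + (γ² + 2μ) u − x γ² = 0`. -/
theorem cauchy_prox_well_defined
    (μ γ : ℝ) (hμ : 0 < μ) (hγ : 0 < γ) (hcond : Real.sqrt μ / 2 ≤ γ) (x : ℝ) :
    ∃ u : ℝ,
      (∀ v : ℝ,
          (x - u) ^ 2 / (2 * μ) + Real.log (γ ^ 2 + u ^ 2)
            ≤ (x - v) ^ 2 / (2 * μ) + Real.log (γ ^ 2 + v ^ 2)) ∧
      (∀ w : ℝ,
          (∀ v : ℝ,
            (x - w) ^ 2 / (2 * μ) + Real.log (γ ^ 2 + w ^ 2)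
              ≤ (x - v) ^ 2 / (2 * μ) + Real.log (γ ^ 2 + v ^ 2)) → w = u) ∧
      (u ^ 3 - x * u ^ 2 + (γ ^ 2 + 2 * μ) * u - x * γ ^ 2 = 0) ∧
      (∀ w : ℝ, w ^ 3 - x * w ^ 2 + (γ ^ 2 + 2 * μ) * w - x * γ ^ 2 = 0 → w = u) := by
  have hμγ : μ ≤ 4 * γ ^ 2 := by
    have h := (Real.sqrt_le_iff.1 (by linarith : Real.sqrt μ ≤ 2 * γ)).2
    linarith
  obtain ⟨c, hc⟩ := surjective_cauchyStationaryMap hμ.le hγ.ne' x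
  have hlt : ∀ v ≠ c, cauchyProxObjective μ γ x c < cauchyProxObjective μ γ x v :=
    fun v hv => cauchyProxObjective_lt_of_ne hμ hγ.ne' hμγ hc hv
  refine ⟨c, fun v => ?_, fun w hw => ?_, (cauchyStationaryMap_eq_iff hγ.ne').1 hc, fun w hw => ?_⟩
  · rcases eq_or_ne v c with rfl | hv
    exacts [le_rfl, (hlt v hv).le]
  · by_contra hwc
    exact (hw c).not_gt (hlt w hwc)
  · exact strictMono_cauchyStationaryMap hμ.le hγ.ne' hμγ |>.injective <|
      ((cauchyStationaryMap_eq_iff hγ.ne').2 hw).trans hc.symm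
end

section
/- Let μ > 0 and γ > 0 with γ ≥ √μ/2, and let x ∈ ℝ. With p = γ² + 2μ − x²/3 and q = xγ² + 2x³/27 − (x/3)(γ² + 2μ), the Cardano discriminant satisfies p³/27 + q²/4 ≥ 0, so the square root appearing in Cardano's formula for the Cauchy proximal operator is real. -/
/-!
Multiplied by `108 γ²`, the discriminant becomes the square `(2γ²x² + 2γ⁴ − 10γ²μ − μ²)²` plus
`μ (4γ² − μ)³`, and `γ ≥ √μ / 2` says precisely that `4γ² − μ ≥ 0`. When `γ = 0` this forces
`μ = 0`, and then the discriminant vanishes identically.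
-/

/-- `p³/27 + q²/4` for the depressed form of `u³ − x u² + (γ² + 2μ) u − x γ²`. -/
noncomputable def cauchyProxDiscriminant (μ γ x : ℝ) : ℝ :=
  (γ ^ 2 + 2 * μ - x ^ 2 / 3) ^ 3 / 27 +
    (x * γ ^ 2 + 2 * x ^ 3 / 27 - (x / 3) * (γ ^ 2 + 2 * μ)) ^ 2 / 4

theorem mul_cauchyProxDiscriminant (μ γ x : ℝ) :
    108 * γ ^ 2 * cauchyProxDiscriminant μ γ x =
      (2 * γ ^ 2 * x ^ 2 + 2 * γ ^ 4 - 10 * γ ^ 2 * μ - μ ^ 2) ^ 2 +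
        μ * (4 * γ ^ 2 - μ) ^ 3 := by
  unfold cauchyProxDiscriminant
  ring

theorem cauchyProxDiscriminant_zero_zero (x : ℝ) : cauchyProxDiscriminant 0 0 x = 0 := by
  unfold cauchyProxDiscriminant
  ring

theorem cauchyProxDiscriminant_nonneg {μ γ : ℝ} (hμ : 0 ≤ μ) (hμγ : μ ≤ 4 * γ ^ 2) (x : ℝ) :
    0 ≤ cauchyProxDiscriminant μ γ x := by
  rcases eq_or_ne γ 0 with rfl | hγ
  · obtain rfl : μ = 0 := by linarith
    rw [cauchyProxDiscriminant_zero_zero]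
  · have hscaled : 0 ≤ 108 * γ ^ 2 * cauchyProxDiscriminant μ γ x := by
      rw [mul_cauchyProxDiscriminant]
      have := sub_nonneg.mpr hμγ
      positivity
    exact nonneg_of_mul_nonneg_right hscaled (by positivity)

theorem cardano_discriminant_nonneg_general
    (μ γ : ℝ) (hμ : 0 < μ) (hcond : Real.sqrt μ / 2 ≤ γ) (x : ℝ)
    (p q : ℝ)
    (hp : p = γ ^ 2 + 2 * μ - x ^ 2 / 3)
    (hq : q = x * γ ^ 2 + 2 * x ^ 3 / 27 - (x / 3) * (γ ^ 2 + 2 * μ)) :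
    0 ≤ p ^ 3 / 27 + q ^ 2 / 4 := by
  have hμγ : μ ≤ 4 * γ ^ 2 := by
    have := (Real.sqrt_le_iff.mp (show Real.sqrt μ ≤ 2 * γ by linarith)).2
    linarith
  subst hp hq
  exact cauchyProxDiscriminant_nonneg hμ.le hμγ x

/-- For `μ > 0`, `γ > 0` with `γ ≥ √μ / 2`, and any `x ∈ ℝ`, the Cardano discriminant
`p³/27 + q²/4` of the Cauchy proximal cubic is nonnegative, where
`p = γ² + 2μ − x²/3` and `q = xγ² + 2x³/27 − (x/3)(γ² + 2μ)`. -/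
theorem cardano_discriminant_nonneg
    (μ γ : ℝ) (hμ : 0 < μ) (hγ : 0 < γ) (hcond : Real.sqrt μ / 2 ≤ γ) (x : ℝ)
    (p q : ℝ)
    (hp : p = γ ^ 2 + 2 * μ - x ^ 2 / 3)
    (hq : q = x * γ ^ 2 + 2 * x ^ 3 / 27 - (x / 3) * (γ ^ 2 + 2 * μ)) :
    0 ≤ p ^ 3 / 27 + q ^ 2 / 4 :=
  cardano_discriminant_nonneg_general μ γ hμ hcond x p q hp hq
end

section
/- Let μ > 0 and γ > 0 with γ < √μ/2. Then for every x ∈ ℝ, the function F(u) = (x − u)²/(2μ) + log(γ² + u²) is not convex on ℝ; in particular its second derivative is strictly negative at u = √3·γ. -/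
/-!
Convexity of `F` on `ℝ` would make `F'` monotone and hence `F'' ≥ 0` everywhere. But
`F''(u) = 1/μ + 2(γ² − u²)/(γ² + u²)²`, and the second term attains its minimum `−1/(4γ²)` at
`u² = 3γ²`, so `F''(√3 γ) = 1/μ − 1/(4γ²)`, which is negative as soon as `2γ < √μ`.
-/

open Real Set

theorem ConvexOn.deriv_deriv_nonneg {f : ℝ → ℝ} (hf : ConvexOn ℝ univ f)
    (hd : Differentiable ℝ f) (x : ℝ) : 0 ≤ deriv (deriv f) x :=
  (monotoneOn_univ.mp (hf.monotoneOn_deriv fun y _ => hd y)).deriv_nonneg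

theorem hasDerivAt_sq_add_sq (γ u : ℝ) : HasDerivAt (fun u => γ ^ 2 + u ^ 2) (2 * u) u := by
  simpa using ((hasDerivAt_id u).pow 2).const_add (γ ^ 2)

noncomputable def proxObjective (μ γ x u : ℝ) : ℝ :=
  (x - u) ^ 2 / (2 * μ) + log (γ ^ 2 + u ^ 2)

section proxObjective

variable {μ γ : ℝ} (x : ℝ)

theorem hasDerivAt_proxObjective (hγ : γ ≠ 0) (u : ℝ) :
    HasDerivAt (proxObjective μ γ x) ((u - x) / μ + 2 * u / (γ ^ 2 + u ^ 2)) u := by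
  have hquad : HasDerivAt (fun u => (x - u) ^ 2 / (2 * μ)) ((u - x) / μ) u := by
    refine ((((hasDerivAt_id u).const_sub x).pow 2).div_const (2 * μ)).congr_deriv ?_
    simp only [id, Nat.cast_ofNat]
    ring
  exact hquad.add ((hasDerivAt_sq_add_sq γ u).log (by positivity))

theorem deriv_proxObjective (hγ : γ ≠ 0) :
    deriv (proxObjective μ γ x) = fun u => (u - x) / μ + 2 * u / (γ ^ 2 + u ^ 2) :=
  funext fun u => (hasDerivAt_proxObjective x hγ u).deriv

theorem hasDerivAt_deriv_proxObjective (hγ : γ ≠ 0) (u : ℝ) :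
    HasDerivAt (deriv (proxObjective μ γ x))
      (1 / μ + 2 * (γ ^ 2 - u ^ 2) / (γ ^ 2 + u ^ 2) ^ 2) u := by
  have hpos : γ ^ 2 + u ^ 2 ≠ 0 := by positivity
  rw [deriv_proxObjective x hγ]
  refine (((hasDerivAt_id u).sub_const x).div_const μ).add ?_
  refine (((hasDerivAt_id u).const_mul 2).div (hasDerivAt_sq_add_sq γ u) hpos).congr_deriv ?_
  simp only [id]
  ring

theorem deriv_deriv_proxObjective_sqrt_three_mul (hγ : γ ≠ 0) :
    deriv (deriv (proxObjective μ γ x)) (√3 * γ) = 1 / μ - 1 / (4 * γ ^ 2) := by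
  have hsq : (√3 * γ) ^ 2 = 3 * γ ^ 2 := by
    rw [mul_pow, sq_sqrt (by norm_num : (0 : ℝ) ≤ 3)]
  rw [(hasDerivAt_deriv_proxObjective x hγ _).deriv, hsq]
  field_simp
  ring

end proxObjective

theorem cauchy_prox_objective_not_convex_general
    (μ γ : ℝ) (hγ : 0 < γ) (hcond : γ < Real.sqrt μ / 2) (x : ℝ) :
    ¬ ConvexOn ℝ (Set.univ : Set ℝ)
        (fun u : ℝ => (x - u) ^ 2 / (2 * μ) + Real.log (γ ^ 2 + u ^ 2)) ∧
      deriv (deriv (fun u : ℝ => (x - u) ^ 2 / (2 * μ) + Real.log (γ ^ 2 + u ^ 2)))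
          (Real.sqrt 3 * γ) < 0 := by
  change ¬ ConvexOn ℝ univ (proxObjective μ γ x) ∧
    deriv (deriv (proxObjective μ γ x)) (√3 * γ) < 0
  have hμ : 4 * γ ^ 2 < μ := by
    have := (lt_sqrt (by positivity)).mp (by linarith : 2 * γ < √μ)
    linarith
  have hneg : deriv (deriv (proxObjective μ γ x)) (√3 * γ) < 0 := by
    rw [deriv_deriv_proxObjective_sqrt_three_mul x hγ.ne', sub_neg]
    exact one_div_lt_one_div_of_lt (by positivity) hμ
  refine ⟨fun hconv => ?_, hneg⟩
  have := hconv.deriv_deriv_nonneg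
    (fun u => (hasDerivAt_proxObjective x hγ.ne' u).differentiableAt) (√3 * γ)
  linarith

/-- For `μ > 0` and `γ > 0` with `γ < √μ / 2`, the proximal objective
`F(u) = (x − u)²/(2μ) + log(γ² + u²)` is not convex on `ℝ` for every `x`;
in particular its second derivative is strictly negative at `u = √3 · γ`. -/
theorem cauchy_prox_objective_not_convex
    (μ γ : ℝ) (hμ : 0 < μ) (hγ : 0 < γ) (hcond : γ < Real.sqrt μ / 2) (x : ℝ) :
    ¬ ConvexOn ℝ (Set.univ : Set ℝ)
        (fun u : ℝ => (x - u) ^ 2 / (2 * μ) + Real.log (γ ^ 2 + u ^ 2)) ∧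
      deriv (deriv (fun u : ℝ => (x - u) ^ 2 / (2 * μ) + Real.log (γ ^ 2 + u ^ 2)))
          (Real.sqrt 3 * γ) < 0 :=
  cauchy_prox_objective_not_convex_general μ γ hγ hcond x
end
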